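/- arXiv:1111.4066 — 3 statements merged into one kernel-verified Lean document; each statement's English description precedes it below -/
import Mathlib

section
/- Let k ≥ 2 be an integer, t_1, …, t_k complex numbers with t_2 ≠ 0, and n ≥ 1. Then det(B_{k,n}) = F_{k,n+1}(t). -/
open Finset

noncomputable def detH (m : ℕ) (a : ℕ → ℕ → ℂ) : ℂ :=
  Matrix.det (Matrix.of fun i j : Fin m => a (i.1 + 1) (j.1 + 1))

/-- Entry (i,j) (1-based) of the matrix `B_{k,n}`:
`-t_2` if `j = i+1`, `t_{i-j+1} / t_2^{i-j}` if `0 ≤ i-j < k`, and `0` otherwise. -/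
noncomputable def bEntry (k : ℕ) (t : ℤ → ℂ) (i j : ℕ) : ℂ :=
  if j = i + 1 then -t 2
  else if 0 ≤ (i : ℤ) - j ∧ (i : ℤ) - j < k then
    t ((i : ℤ) - j + 1) / t 2 ^ ((i : ℤ) - j)
  else 0

/-!
`B_{k,n}` is the lower Hessenberg Toeplitz matrix `(b (i - j))` with `b (-1) = -t₂` and
`b d = t_{d+1} / t₂^d` for `0 ≤ d < k`. Expanding such a determinant along its first column,
the minor of row `i` is block lower triangular: `i` diagonal entries `b (-1)` above the Toeplitz
matrix of size `n - 1 - i`. Hence `det H_n = ∑ᵢ (-b (-1))ⁱ b i det H_{n-1-i}`, and for `B` the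
coefficient `(-b (-1))ⁱ b i = t₂ⁱ t_{i+1} / t₂ⁱ` is exactly `t_{i+1}`: the determinants obey
the Fibonacci recurrence, starting from the empty determinant `1 = F_{k,1}`.
-/

section Toeplitz

variable {R : Type*} [CommRing R]

def toeplitz (a : ℤ → R) (n : ℕ) : Matrix (Fin n) (Fin n) R :=
  Matrix.of fun i j => a (i.val - j.val)

variable {a : ℤ → R}

theorem det_toeplitz_submatrix_succAbove_succ (ha : ∀ d < -1, a d = 0) (m : ℕ)
    (i : Fin (m + 1)) :
    ((toeplitz a (m + 1)).submatrix i.succAbove Fin.succ).det =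
      a (-1) ^ (i : ℕ) * (toeplitz a (m - i)).det := by
  induction m with
  | zero =>
    obtain rfl := Fin.fin_one_eq_zero i
    simp [Matrix.det_isEmpty]
  | succ m ih =>
    induction i using Fin.cases with
    | zero =>
      simp only [Fin.val_zero, pow_zero, one_mul, Nat.sub_zero]
      congr 1
      ext r c
      simp only [toeplitz, Matrix.submatrix_apply, Matrix.of_apply, Fin.succAbove_zero,
        Fin.val_succ]
      push_cast
      ring_nf
    | succ i =>
      rw [Matrix.det_succ_row_zero, Fintype.sum_eq_single 0]
      · have hminor : ((toeplitz a (m + 1 + 1)).submatrix i.succ.succAbove Fin.succ).submatrix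
            Fin.succ (Fin.succAbove 0) = (toeplitz a (m + 1)).submatrix i.succAbove Fin.succ := by
          ext r c
          simp only [toeplitz, Matrix.submatrix_apply, Matrix.of_apply, Fin.succAbove_zero,
            Fin.succ_succAbove_succ, Fin.val_succ]
          push_cast
          ring_nf
        have hcorner :
            (toeplitz a (m + 1 + 1)).submatrix i.succ.succAbove Fin.succ 0 0 = a (-1) := by
          simp [toeplitz]
        rw [hminor, hcorner, ih, Fin.val_zero, Fin.val_succ, Nat.add_sub_add_right]
        ring
      · intro c hc
        rw [Matrix.submatrix_apply, Fin.succ_succAbove_zero, toeplitz, Matrix.of_apply,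
          ha _ (by simpa [Fin.pos_iff_ne_zero] using hc)]
        simp

theorem det_toeplitz_succ (ha : ∀ d < -1, a d = 0) (n : ℕ) :
    (toeplitz a (n + 1)).det =
      ∑ i ∈ range (n + 1), (-a (-1)) ^ i * a i * (toeplitz a (n - i)).det := by
  rw [Matrix.det_succ_column_zero, ← Fin.sum_univ_eq_sum_range
    (fun i => (-a (-1)) ^ i * a i * (toeplitz a (n - i)).det)]
  refine sum_congr rfl fun i _ => ?_
  rw [det_toeplitz_submatrix_succAbove_succ ha, neg_pow]
  simp only [toeplitz, Matrix.of_apply, Fin.val_zero, Nat.cast_zero, sub_zero]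
  ring

end Toeplitz

noncomputable def bSymbol (k : ℕ) (t : ℤ → ℂ) (d : ℤ) : ℂ :=
  if d = -1 then -t 2 else if 0 ≤ d ∧ d < k then t (d + 1) / t 2 ^ d else 0

theorem bEntry_eq_bSymbol (k : ℕ) (t : ℤ → ℂ) (i j : ℕ) :
    bEntry k t i j = bSymbol k t (i - j) := by
  have hsup : j = i + 1 ↔ (i : ℤ) - j = -1 := by omega
  simp only [bEntry, bSymbol, hsup]

theorem detH_bEntry (k : ℕ) (t : ℤ → ℂ) (n : ℕ) :
    detH n (bEntry k t) = (toeplitz (bSymbol k t) n).det := by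
  unfold detH toeplitz
  congr 1
  ext i j
  rw [Matrix.of_apply, bEntry_eq_bSymbol, Matrix.of_apply]
  push_cast
  ring_nf

theorem bSymbol_of_lt_neg_one (k : ℕ) (t : ℤ → ℂ) {d : ℤ} (hd : d < -1) :
    bSymbol k t d = 0 := by
  rw [bSymbol, if_neg (by omega), if_neg (by omega)]

theorem neg_bSymbol_neg_one_pow_mul (k : ℕ) (t : ℤ → ℂ) (ht2 : t 2 ≠ 0) (i : ℕ) :
    (-bSymbol k t (-1)) ^ i * bSymbol k t i = if i < k then t (i + 1) else 0 := by
  rw [bSymbol, if_pos rfl, neg_neg, bSymbol, if_neg (by omega)]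
  split_ifs with h1 h2 h2
  · rw [zpow_natCast]
    field_simp
  · omega
  · omega
  · simp

theorem sum_Icc_one_eq_sum_range {M : Type*} [AddCommMonoid M] (k : ℕ) (f : ℤ → M) :
    ∑ j ∈ Icc (1 : ℤ) k, f j = ∑ i ∈ range k, f (i + 1) := by
  rw [Int.Icc_eq_finset_map, sum_map, add_sub_cancel_right, Int.toNat_natCast]
  simp [add_comm]

theorem genFib_succ_succ (k : ℕ) (t F : ℤ → ℂ) (hFneg : ∀ n : ℤ, n < 1 → F n = 0)
    (hFrec : ∀ n : ℤ, 1 ≤ n →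
      F (n + 1) = ∑ j ∈ Icc (1 : ℤ) k, t j * F (n + 1 - j)) (m : ℕ) :
    F (m + 1 + 1) = ∑ i ∈ range (m + 1), (if i < k then t (i + 1) else 0) * F (m + 1 - i) := by
  set g : ℕ → ℂ := fun i => (if i < k then t (i + 1) else 0) * F (m + 1 - i)
  rw [hFrec (m + 1) (by omega), sum_Icc_one_eq_sum_range]
  calc ∑ i ∈ range k, t (i + 1) * F (m + 1 + 1 - (i + 1))
      = ∑ i ∈ range k, g i := sum_congr rfl fun i hi => by
        simp only [g]
        rw [if_pos (mem_range.1 hi)]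
        ring_nf
    _ = ∑ i ∈ range (k + (m + 1)), g i :=
      sum_subset (range_subset_range.2 (by omega)) fun i _ hi => by
        rw [mem_range, not_lt] at hi
        simp only [g]
        rw [if_neg (by omega), zero_mul]
    _ = ∑ i ∈ range (m + 1), g i :=
      (sum_subset (range_subset_range.2 (by omega)) fun i _ hi => by
        rw [mem_range, not_lt] at hi
        simp only [g]
        rw [hFneg _ (by omega), mul_zero]).symm

theorem det_B_eq_genFibPoly_general (k : ℕ) (t : ℤ → ℂ) (ht2 : t 2 ≠ 0)
    (F : ℤ → ℂ) (hFneg : ∀ n : ℤ, n < 1 → F n = 0) (hF1 : F 1 = 1)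
    (hFrec : ∀ n : ℤ, 1 ≤ n →
      F (n + 1) = ∑ j ∈ Finset.Icc (1 : ℤ) (k : ℤ), t j * F (n + 1 - j))
    (n : ℕ) :
    detH n (bEntry k t) = F ((n : ℤ) + 1) := by
  rw [detH_bEntry]
  induction n using Nat.strong_induction_on with
  | _ n ih =>
  rcases n with _ | m
  · simp [Matrix.det_isEmpty, hF1]
  rw [det_toeplitz_succ fun _ => bSymbol_of_lt_neg_one k t, Nat.cast_succ,
    genFib_succ_succ k t F hFneg hFrec]
  refine sum_congr rfl fun i hi => ?_
  have him : i ≤ m := Nat.lt_succ_iff.1 (mem_range.1 hi)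
  rw [neg_bSymbol_neg_one_pow_mul k t ht2, ih (m - i) (by omega), Nat.cast_sub him]
  ring_nf

theorem det_B_eq_genFibPoly (k : ℕ) (hk : 2 ≤ k) (t : ℤ → ℂ) (ht0 : t 0 = 1) (ht2 : t 2 ≠ 0)
    (F : ℤ → ℂ) (hFneg : ∀ n : ℤ, n < 1 → F n = 0) (hF1 : F 1 = 1)
    (hFrec : ∀ n : ℤ, 1 ≤ n →
      F (n + 1) = ∑ j ∈ Finset.Icc (1 : ℤ) (k : ℤ), t j * F (n + 1 - j))
    (n : ℕ) (hn : 1 ≤ n) :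
    detH n (bEntry k t) = F ((n : ℤ) + 1) :=
  det_B_eq_genFibPoly_general k t ht2 F hFneg hF1 hFrec n
end

section
/- Let k ≥ 2 be an integer and n ≥ 1. If Q_{k,n} is formed with t_1 = 2 and t_j = 1 for 2 ≤ j ≤ k, then det(Q_{k,n}) = p^k_{k,n+1}. -/
/-!
`Q_{k,n}` is a lower Hessenberg Toeplitz matrix with symbol `q_d = i^|d| t_{d+1} / t_2^d`.
Expand its determinant along the first column. Deleting row `i > 0` leaves a minor whose first
row is `(q_{-1}, 0, …, 0)`, so by induction that minor has determinant `q_{-1}^i` times the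
Toeplitz determinant of size `n - 1 - i`. Hence
`det Q_n = ∑_{i < min(n,k)} (-q_{-1})^i q_i det Q_{n-1-i}`, and `(-q_{-1})^i q_i = t_0^i t_{i+1}`
because `-i·i = 1` and the powers of `t_2` cancel. For `t = (1, 2, 1, …, 1)` this is the
order-`k` Pell recurrence with coefficients `2, 1, …, 1`, truncated exactly as the vanishing
initial values of `p` truncate it.
-/

open Finset

/-- Entry (r,s) (1-based) of the matrix `Q_{k,n}`:
`i^{|r-s|} * t_{r-s+1} / t_2^{r-s}` if `-1 ≤ r-s < k`, and `0` otherwise. -/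
noncomputable def qEntry (k : ℕ) (t : ℤ → ℂ) (r s : ℕ) : ℂ :=
  if -1 ≤ (r : ℤ) - s ∧ (r : ℤ) - s < k then
    Complex.I ^ ((r : ℤ) - s).natAbs * t ((r : ℤ) - s + 1) / t 2 ^ ((r : ℤ) - s)
  else 0

section Toeplitz

variable {R : Type*} [CommRing R]

def toeplitzMatrix (b : ℤ → R) (n : ℕ) : Matrix (Fin n) (Fin n) R :=
  Matrix.of fun i j => b ((i : ℤ) - j)

theorem det_toeplitzMatrix_submatrix_succAbove_succ {b : ℤ → R}
    (hb : ∀ d ≤ -2, b d = 0) (N : ℕ) (i : Fin (N + 1)) :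
    ((toeplitzMatrix b (N + 1)).submatrix i.succAbove Fin.succ).det =
      b (-1) ^ (i : ℕ) * (toeplitzMatrix b (N - i)).det := by
  induction N with
  | zero =>
    rw [Fin.fin_one_eq_zero i]
    simp
  | succ N ih =>
    cases i using Fin.cases with
    | zero =>
      rw [Fin.succAbove_zero, Fin.val_zero, pow_zero, one_mul, Nat.sub_zero]
      congr 1
      ext p q
      simp [toeplitzMatrix]
    | succ i =>
      rw [Matrix.det_succ_row_zero, Fin.sum_univ_succ, Fintype.sum_eq_zero]
      · have hcorner :
            (toeplitzMatrix b (N + 2)).submatrix i.succ.succAbove Fin.succ 0 0 = b (-1) := by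
          simp [toeplitzMatrix]
        have hminor :
            ((toeplitzMatrix b (N + 2)).submatrix i.succ.succAbove Fin.succ).submatrix
              Fin.succ (Fin.succAbove 0) =
            (toeplitzMatrix b (N + 1)).submatrix i.succAbove Fin.succ := by
          ext p q
          simp [toeplitzMatrix, Fin.succ_succAbove_succ]
        rw [hcorner, hminor, ih, Fin.val_succ, Nat.add_sub_add_right, Fin.val_zero, pow_zero]
        ring
      · intro j
        -- the entry `b (0 - (j + 2))` of the first row, in simp-normal form
        have : b (-1 + (-1 + -(j : ℤ))) = 0 := hb _ (by omega)
        simp [toeplitzMatrix, this]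

theorem det_toeplitzMatrix_succ {b : ℤ → R} (hb : ∀ d ≤ -2, b d = 0) (N : ℕ) :
    (toeplitzMatrix b (N + 1)).det =
      ∑ i ∈ range (N + 1), (-b (-1)) ^ i * b i * (toeplitzMatrix b (N - i)).det := by
  rw [Matrix.det_succ_column_zero, ← Fin.sum_univ_eq_sum_range]
  refine Fintype.sum_congr _ _ fun i => ?_
  rw [det_toeplitzMatrix_submatrix_succAbove_succ hb, neg_pow, toeplitzMatrix, Matrix.of_apply,
    Fin.val_zero, Nat.cast_zero, sub_zero]
  ring

theorem detH_eq_det_toeplitzMatrix (b : ℤ → ℂ) (n : ℕ) :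
    detH n (fun r s => b ((r : ℤ) - s)) = (toeplitzMatrix b n).det := by
  simp [detH, toeplitzMatrix]

end Toeplitz

section Recurrence

variable {R : Type*} [Semiring R] {k : ℕ} {c : ℕ → R}

theorem eq_of_truncated_recurrence {f g : ℕ → R} (h0 : f 0 = g 0)
    (hf : ∀ N, f (N + 1) = ∑ i ∈ range (min (N + 1) k), c i * f (N - i))
    (hg : ∀ N, g (N + 1) = ∑ i ∈ range (min (N + 1) k), c i * g (N - i)) : f = g := by
  funext n
  induction n using Nat.strong_induction_on with
  | _ n ih =>
    cases n with
    | zero => exact h0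
    | succ N =>
      rw [hf, hg]
      exact sum_congr rfl fun i hi => by rw [ih (N - i) (by omega)]

variable {p : ℤ → R} (hzero : ∀ n : ℤ, 1 - (k : ℤ) < n → n ≤ 0 → p n = 0)
  (hrec : ∀ n : ℤ, 0 < n → p n = ∑ i ∈ range k, c i * p (n - 1 - i))
include hzero hrec

theorem one_eq_coeff_of_recurrence (hk : 0 < k) (hinit : p (1 - k) = 1) : p 1 = c (k - 1) := by
  rw [hrec 1 one_pos, sum_eq_single_of_mem (k - 1) (mem_range.2 (by omega))]
  · rw [show (1 : ℤ) - 1 - ((k - 1 : ℕ) : ℤ) = 1 - k by omega, hinit, mul_one]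
  · intro i hi hik
    have := mem_range.1 hi
    rw [hzero _ (by omega) (by omega), mul_zero]

theorem succ_succ_eq_truncated_sum_of_recurrence (N : ℕ) :
    p ((N + 1 : ℕ) + 1) = ∑ i ∈ range (min (N + 1) k), c i * p ((N - i : ℕ) + 1) := by
  have hmin : range (min (N + 1) k) ⊆ range k := range_subset_range.2 (min_le_right _ _)
  rw [hrec _ (by positivity), ← sum_subset hmin fun i hi hiN => ?_]
  · refine sum_congr rfl fun i hi => ?_
    have hiN : i ≤ N := Nat.lt_succ_iff.1 ((mem_range.1 hi).trans_le (min_le_left _ _))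
    push_cast [Nat.cast_sub hiN]
    ring_nf
  · simp only [mem_range, lt_min_iff, not_and, not_lt] at hi hiN
    rw [hzero _ (by omega) (by omega), mul_zero]

end Recurrence

theorem pell_recurrence_eq_sum_range {R : Type*} [Semiring R] (p : ℤ → R) (n : ℤ) {k : ℕ}
    (hk : 0 < k) :
    2 * p (n - 1) + ∑ j ∈ Icc (2 : ℤ) k, p (n - j) =
      ∑ i ∈ range k, (if i = 0 then 2 else 1) * p (n - 1 - i) := by
  obtain ⟨k, rfl⟩ := Nat.exists_eq_add_of_lt hk
  rw [zero_add, sum_range_succ', add_comm]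
  simp only [Nat.add_one_ne_zero, if_false, one_mul, if_true, Nat.cast_zero, sub_zero]
  congr 1
  refine sum_nbij' (fun j => (j - 2).toNat) (fun i => (i : ℤ) + 2) ?_ ?_ ?_ ?_ ?_ <;>
    intro x hx <;> simp only [mem_Icc, mem_range] at hx ⊢
  any_goals omega
  congr 1
  omega

section Q

variable (k : ℕ) (t : ℤ → ℂ)

noncomputable def qSymbol (d : ℤ) : ℂ :=
  if -1 ≤ d ∧ d < k then Complex.I ^ d.natAbs * t (d + 1) / t 2 ^ d else 0

theorem qEntry_eq_qSymbol_sub : qEntry k t = fun r s : ℕ => qSymbol k t ((r : ℤ) - s) := rfl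

variable {k t}

theorem qSymbol_of_le_neg_two {d : ℤ} (hd : d ≤ -2) : qSymbol k t d = 0 :=
  if_neg fun h => by omega

theorem qSymbol_natCast_of_le {i : ℕ} (hi : k ≤ i) : qSymbol k t i = 0 :=
  if_neg fun h => by omega

theorem neg_qSymbol_neg_one_pow_mul_qSymbol (ht2 : t 2 ≠ 0) {i : ℕ} (hi : i < k) :
    (-qSymbol k t (-1)) ^ i * qSymbol k t i = t 0 ^ i * t (i + 1) := by
  rw [qSymbol, if_pos (by omega), qSymbol, if_pos (by omega)]
  simp only [Int.natAbs_neg, Int.natAbs_one, pow_one, zpow_neg, zpow_one, div_inv_eq_mul,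
    Int.natAbs_natCast, zpow_natCast]
  field_simp
  calc (-(Complex.I * t 0 * t 2)) ^ i * Complex.I ^ i * t (i + 1)
      = (-(Complex.I * Complex.I)) ^ i * (t (i + 1) * t 2 ^ i * t 0 ^ i) := by ring
    _ = _ := by simp

theorem detH_qEntry_succ (ht2 : t 2 ≠ 0) (N : ℕ) :
    detH (N + 1) (qEntry k t) =
      ∑ i ∈ range (min (N + 1) k), t 0 ^ i * t (i + 1) * detH (N - i) (qEntry k t) := by
  simp only [qEntry_eq_qSymbol_sub, detH_eq_det_toeplitzMatrix]
  rw [det_toeplitzMatrix_succ fun d => qSymbol_of_le_neg_two]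
  have hmin : range (min (N + 1) k) ⊆ range (N + 1) := range_subset_range.2 (min_le_left _ _)
  rw [← sum_subset hmin fun i hi hik => ?_]
  · refine sum_congr rfl fun i hi => ?_
    rw [neg_qSymbol_neg_one_pow_mul_qSymbol ht2 ((mem_range.1 hi).trans_le (min_le_right _ _))]
  · simp only [mem_range, lt_min_iff, not_and, not_lt] at hi hik
    rw [qSymbol_natCast_of_le (hik hi), mul_zero, zero_mul]

end Q

theorem det_Q_eq_kSOkP_general (k : ℕ) (hk : 2 ≤ k) (t : ℤ → ℂ) (ht0 : t 0 = 1) (ht1 : t 1 = 2)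
    (ht : ∀ j : ℤ, 2 ≤ j → j ≤ (k : ℤ) → t j = 1)
    (p : ℤ → ℂ) (hpinit : p (1 - (k : ℤ)) = 1)
    (hpzero : ∀ n : ℤ, 1 - (k : ℤ) < n → n ≤ 0 → p n = 0)
    (hprec : ∀ n : ℤ, 0 < n →
      p n = 2 * p (n - 1) + ∑ j ∈ Finset.Icc (2 : ℤ) (k : ℤ), p (n - j))
    (n : ℕ) :
    detH n (qEntry k t) = p ((n : ℤ) + 1) := by
  set c : ℕ → ℂ := fun i => if i = 0 then 2 else 1
  have hrec : ∀ m : ℤ, 0 < m → p m = ∑ i ∈ range k, c i * p (m - 1 - i) := fun m hm => by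
    rw [hprec m hm, pell_recurrence_eq_sum_range p m (by omega)]
  have hc : ∀ i < k, t 0 ^ i * t (i + 1) = c i := by
    rintro (_ | i) hi
    · simp [c, ht1]
    · simpa [c, ht0, add_assoc] using ht _ (by omega) (by omega)
  have ht2 : t 2 ≠ 0 := by
    rw [ht 2 le_rfl (by omega)]
    exact one_ne_zero
  suffices (fun m => detH m (qEntry k t)) = fun m : ℕ => p ((m : ℤ) + 1) from congrFun this n
  refine eq_of_truncated_recurrence (k := k) (c := c) ?_ (fun N => ?_) (fun N => ?_)
  · rw [Nat.cast_zero, zero_add, one_eq_coeff_of_recurrence hpzero hrec (by omega) hpinit]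
    rw [detH, Matrix.det_fin_zero]
    exact (if_neg (by omega)).symm
  · rw [detH_qEntry_succ ht2]
    exact sum_congr rfl fun i hi => by
      rw [hc i (lt_of_lt_of_le (mem_range.1 hi) (min_le_right _ _))]
  · exact succ_succ_eq_truncated_sum_of_recurrence hpzero hrec N

theorem det_Q_eq_kSOkP (k : ℕ) (hk : 2 ≤ k) (t : ℤ → ℂ) (ht0 : t 0 = 1) (ht1 : t 1 = 2)
    (ht : ∀ j : ℤ, 2 ≤ j → j ≤ (k : ℤ) → t j = 1)
    (p : ℤ → ℂ) (hpinit : p (1 - (k : ℤ)) = 1)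
    (hpzero : ∀ n : ℤ, 1 - (k : ℤ) < n → n ≤ 0 → p n = 0)
    (hprec : ∀ n : ℤ, 0 < n →
      p n = 2 * p (n - 1) + ∑ j ∈ Finset.Icc (2 : ℤ) (k : ℤ), p (n - j))
    (n : ℕ) (hn : 1 ≤ n) :
    detH n (qEntry k t) = p ((n : ℤ) + 1) :=
  det_Q_eq_kSOkP_general k hk t ht0 ht1 ht p hpinit hpzero hprec n
end

section
/- Let k ≥ 2 be an integer and n ≥ 1. If H_{k,n} and L_{k,n} are formed with t_1 = 2 and t_j = 1 for 2 ≤ j ≤ k, then per(H_{k,n}) = p^k_{k,n+1} and per(L_{k,n}) = p^k_{k,n+1}. -/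
open Finset

noncomputable def perH (m : ℕ) (a : ℕ → ℕ → ℂ) : ℂ :=
  ∑ σ : Equiv.Perm (Fin m), ∏ i : Fin m, a (i.1 + 1) ((σ i).1 + 1)

/-- Entry (r,s) (1-based) of the matrix `H_{k,n}`:
`i^{r-s} * t_{r-s+1} / t_2^{r-s}` if `-1 ≤ r-s < k`, and `0` otherwise. -/
noncomputable def hEntry (k : ℕ) (t : ℤ → ℂ) (r s : ℕ) : ℂ :=
  if -1 ≤ (r : ℤ) - s ∧ (r : ℤ) - s < k then
    Complex.I ^ ((r : ℤ) - s) * t ((r : ℤ) - s + 1) / t 2 ^ ((r : ℤ) - s)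
  else 0

/-- Entry (i,j) (1-based) of the matrix `L_{k,n}`:
`t_{i-j+1} / t_2^{i-j}` if `-1 ≤ i-j < k`, and `0` otherwise. -/
noncomputable def lEntry (k : ℕ) (t : ℤ → ℂ) (i j : ℕ) : ℂ :=
  if -1 ≤ (i : ℤ) - j ∧ (i : ℤ) - j < k then
    t ((i : ℤ) - j + 1) / t 2 ^ ((i : ℤ) - j)
  else 0

/-!
Both matrices are lower Hessenberg Toeplitz matrices `(b (r - s))`. Expanding such a permanent
along the first row leaves a matrix of the same shape whose first column is shifted up by one, so
iterating gives `per T_{m+1} = ∑_{d ≤ m} b(-1)^d b(d) per T_{m-d}`. For the symbol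
`b(d) = ε^d t_{d+1} / t_2^d` the weight `b(-1)^d b(d)` is `t_{d+1}`, whatever `ε`, so the
permanents obey the recurrence `x_{m+1} = 2 x_m + x_{m-1} + ⋯ + x_{m-k+1}` of the order-`k` Pell
numbers, with the same initial value `1`.
-/

namespace Matrix

variable {R : Type*}

def toeplitz (b : ℤ → R) (n : ℕ) : Matrix (Fin n) (Fin n) R :=
  of fun i j => b ((i : ℤ) - j)

def toeplitzWithFirstCol (b : ℤ → R) (c : ℕ → R) (n : ℕ) : Matrix (Fin n) (Fin n) R :=
  of fun i j => if (j : ℕ) = 0 then c i else b ((i : ℤ) - j)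

theorem toeplitzWithFirstCol_self (b : ℤ → R) (n : ℕ) :
    toeplitzWithFirstCol b (fun i => b i) n = toeplitz b n := by
  ext i j
  by_cases hj : (j : ℕ) = 0 <;> simp [toeplitzWithFirstCol, toeplitz, hj]

theorem toeplitzWithFirstCol_submatrix_succ_succ (b : ℤ → R) (c : ℕ → R) (n : ℕ) :
    (toeplitzWithFirstCol b c (n + 1)).submatrix Fin.succ Fin.succ = toeplitz b n := by
  ext i j
  simp [toeplitzWithFirstCol, toeplitz]

theorem toeplitzWithFirstCol_submatrix_succ_succAbove_one (b : ℤ → R) (c : ℕ → R) (n : ℕ) :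
    (toeplitzWithFirstCol b c (n + 2)).submatrix Fin.succ (Fin.succAbove 1)
      = toeplitzWithFirstCol b (fun i => c (i + 1)) (n + 1) := by
  ext i j
  cases j using Fin.cases <;> simp [toeplitzWithFirstCol]

section CommSemiring

variable [CommSemiring R]

theorem permanent_succ_column_zero {n : ℕ} (A : Matrix (Fin (n + 1)) (Fin (n + 1)) R) :
    A.permanent = ∑ i, A i 0 * (A.submatrix i.succAbove Fin.succ).permanent := by
  rw [permanent, Finset.univ_perm_fin_succ, ← Finset.univ_product_univ]
  simp only [Finset.sum_map, Equiv.toEmbedding_apply, Finset.sum_product]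
  refine Finset.sum_congr rfl fun i _ => Fin.cases ?_ (fun i => ?_) i
  · simp only [Fin.prod_univ_succ, permanent, Finset.mul_sum,
      Equiv.Perm.decomposeFin_symm_apply_zero, Equiv.swap_self,
      Equiv.Perm.decomposeFin_symm_apply_succ, Fin.succAbove_zero,
      Equiv.coe_refl, id, submatrix_apply]
  · rw [permanent, Finset.mul_sum]
    refine Fintype.sum_equiv (Equiv.mulLeft i.cycleRange) _ _ fun σ => ?_
    simp only [Fin.prod_univ_succ, Equiv.Perm.decomposeFin_symm_apply_zero,
      Equiv.Perm.decomposeFin_symm_apply_succ, submatrix_apply,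
      Equiv.coe_mulLeft, Equiv.Perm.mul_apply, Fin.succAbove_cycleRange]

theorem permanent_succ_row_zero {n : ℕ} (A : Matrix (Fin (n + 1)) (Fin (n + 1)) R) :
    A.permanent = ∑ j, A 0 j * (A.submatrix Fin.succ j.succAbove).permanent := by
  rw [← permanent_transpose A, permanent_succ_column_zero]
  simp_rw [← permanent_transpose (A.submatrix Fin.succ _), transpose_submatrix]
  rfl

theorem permanent_toeplitzWithFirstCol_succ_succ {b : ℤ → R} (hb : ∀ d < -1, b d = 0)
    (c : ℕ → R) (n : ℕ) :
    (toeplitzWithFirstCol b c (n + 2)).permanent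
      = c 0 * (toeplitz b (n + 1)).permanent
        + b (-1) * (toeplitzWithFirstCol b (fun i => c (i + 1)) (n + 1)).permanent := by
  rw [permanent_succ_row_zero, Fin.sum_univ_succ, Fin.sum_univ_succ, Fin.succ_zero_eq_one,
    Fin.succAbove_zero, toeplitzWithFirstCol_submatrix_succ_succ,
    toeplitzWithFirstCol_submatrix_succ_succAbove_one]
  have hrow : ∀ j : Fin n, toeplitzWithFirstCol b c (n + 2) 0 j.succ.succ = 0 := fun j => by
    simp only [toeplitzWithFirstCol, of_apply, Fin.val_zero, Fin.val_succ]
    exact hb _ (by omega)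
  simp only [hrow, zero_mul, sum_const_zero, add_zero]
  simp [toeplitzWithFirstCol]

theorem permanent_toeplitzWithFirstCol {b : ℤ → R} (hb : ∀ d < -1, b d = 0) (c : ℕ → R)
    (n : ℕ) : (toeplitzWithFirstCol b c (n + 1)).permanent
      = ∑ d ∈ range (n + 1), b (-1) ^ d * c d * (toeplitz b (n - d)).permanent := by
  induction n generalizing c with
  | zero => simp [permanent_unique, permanent_isEmpty, toeplitzWithFirstCol]
  | succ n ih =>
    rw [permanent_toeplitzWithFirstCol_succ_succ hb, ih, sum_range_succ' _ (n + 1), mul_sum]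
    simp only [pow_zero, one_mul, Nat.sub_zero, pow_succ]
    rw [add_comm]
    congr 1
    exact sum_congr rfl fun d _ => by rw [Nat.add_sub_add_right]; ring

theorem permanent_toeplitz_succ {b : ℤ → R} (hb : ∀ d < -1, b d = 0) (n : ℕ) :
    (toeplitz b (n + 1)).permanent
      = ∑ d ∈ range (n + 1), b (-1) ^ d * b d * (toeplitz b (n - d)).permanent := by
  rw [← toeplitzWithFirstCol_self, permanent_toeplitzWithFirstCol hb]

end CommSemiring

end Matrix

theorem eq_of_convolution_recurrence {R : Type*} [Semiring R] {w u v : ℕ → R} (h0 : u 0 = v 0)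
    (hu : ∀ m, u (m + 1) = ∑ d ∈ range (m + 1), w d * u (m - d))
    (hv : ∀ m, v (m + 1) = ∑ d ∈ range (m + 1), w d * v (m - d)) : u = v := by
  funext n
  induction n using Nat.strong_induction_on with
  | _ n ih =>
    cases n with
    | zero => exact h0
    | succ m =>
      rw [hu, hv]
      exact sum_congr rfl fun d _ => by rw [ih (m - d) (by omega)]

/-- The symbol of `H_{k,n}` (`ε = i`) and of `L_{k,n}` (`ε = 1`). -/
noncomputable def bandSymbol (k : ℕ) (t : ℤ → ℂ) (ε : ℂ) (d : ℤ) : ℂ :=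
  if -1 ≤ d ∧ d < k then ε ^ d * t (d + 1) / t 2 ^ d else 0

noncomputable def bandCoeff (k : ℕ) (t : ℤ → ℂ) (d : ℕ) : ℂ :=
  if d < k then t (d + 1) else 0

section bandSymbol

variable {k : ℕ} {t : ℤ → ℂ}

theorem bandSymbol_of_lt_neg_one (ε : ℂ) {d : ℤ} (hd : d < -1) : bandSymbol k t ε d = 0 :=
  if_neg fun h => by omega

/-- The superdiagonal entry `ε⁻¹ t₂` cancels the factor `ε^d / t₂^d` of the `d`-th subdiagonal. -/
theorem bandSymbol_neg_one_pow_mul {ε : ℂ} (hε : ε ≠ 0) (ht0 : t 0 = 1) (ht2 : t 2 ≠ 0) (d : ℕ) :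
    bandSymbol k t ε (-1) ^ d * bandSymbol k t ε d = bandCoeff k t d := by
  have hneg : bandSymbol k t ε (-1) = ε⁻¹ * t 2 := by
    rw [bandSymbol, if_pos (by omega)]
    simp [ht0]
  rw [hneg]
  by_cases hd : d < k
  · rw [bandSymbol, bandCoeff, if_pos hd, if_pos (by omega), zpow_natCast, zpow_natCast,
      mul_pow, inv_pow]
    field_simp
  · simp [bandSymbol, bandCoeff, hd, show ¬ (d : ℤ) < k by omega]

theorem permanent_toeplitz_bandSymbol_succ {ε : ℂ} (hε : ε ≠ 0) (ht0 : t 0 = 1) (ht2 : t 2 ≠ 0)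
    (n : ℕ) : (Matrix.toeplitz (bandSymbol k t ε) (n + 1)).permanent
      = ∑ d ∈ range (n + 1),
          bandCoeff k t d * (Matrix.toeplitz (bandSymbol k t ε) (n - d)).permanent := by
  simp only [Matrix.permanent_toeplitz_succ (fun d => bandSymbol_of_lt_neg_one ε),
    bandSymbol_neg_one_pow_mul hε ht0 ht2]

end bandSymbol

theorem perH_eq_permanent_toeplitz (b : ℤ → ℂ) (n : ℕ) :
    perH n (fun r s => b ((r : ℤ) - s)) = (Matrix.toeplitz b n).permanent := by
  rw [← Matrix.permanent_transpose, Matrix.permanent, perH]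
  simp [Matrix.toeplitz]

theorem hEntry_eq_bandSymbol (k : ℕ) (t : ℤ → ℂ) :
    hEntry k t = fun (r s : ℕ) => bandSymbol k t Complex.I ((r : ℤ) - s) := rfl

theorem lEntry_eq_bandSymbol (k : ℕ) (t : ℤ → ℂ) :
    lEntry k t = fun (r s : ℕ) => bandSymbol k t 1 ((r : ℤ) - s) := by
  ext r s
  simp [lEntry, bandSymbol]

section PellRecurrence

variable {k : ℕ} {t p : ℤ → ℂ}

theorem pell_eq_sum_range (hk : 1 ≤ k) (ht1 : t 1 = 2)
    (ht : ∀ j : ℤ, 2 ≤ j → j ≤ (k : ℤ) → t j = 1)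
    (hprec : ∀ n : ℤ, 0 < n →
      p n = 2 * p (n - 1) + ∑ j ∈ Finset.Icc (2 : ℤ) (k : ℤ), p (n - j))
    {n : ℤ} (hn : 0 < n) : p n = ∑ d ∈ range k, t (d + 1) * p (n - 1 - d) := by
  obtain ⟨k, rfl⟩ : ∃ k', k = k' + 1 := ⟨k - 1, by omega⟩
  rw [hprec n hn, sum_range_succ', add_comm]
  simp only [Nat.cast_zero, zero_add, sub_zero, ht1]
  congr 1
  refine sum_nbij' (fun j => (j - 2).toNat) (fun d => (d : ℤ) + 2) ?_ ?_ ?_ ?_ ?_ <;>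
    intro x hx <;> simp only [mem_Icc, mem_range, Nat.cast_add, Nat.cast_one] at hx ⊢
  case refine_5 =>
    rw [ht _ (by omega) (by omega), one_mul]
    congr 1
    omega
  all_goals omega

theorem pell_one (hk : 2 ≤ k) (hpinit : p (1 - (k : ℤ)) = 1)
    (hpzero : ∀ n : ℤ, 1 - (k : ℤ) < n → n ≤ 0 → p n = 0)
    (hprec : ∀ n : ℤ, 0 < n →
      p n = 2 * p (n - 1) + ∑ j ∈ Finset.Icc (2 : ℤ) (k : ℤ), p (n - j)) :
    p 1 = 1 := by
  have hsum : ∑ j ∈ Icc (2 : ℤ) k, p (1 - j) = 1 := by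
    rw [sum_eq_single (k : ℤ) (fun j hj hjk => ?_) (fun hk' => absurd (by simp; omega) hk')]
    · exact hpinit
    · rw [mem_Icc] at hj
      exact hpzero _ (by omega) (by omega)
  rw [hprec 1 one_pos, sub_self, hpzero 0 (by omega) le_rfl, hsum]
  ring

theorem pell_succ_eq_sum_bandCoeff (hk : 1 ≤ k) (ht1 : t 1 = 2)
    (ht : ∀ j : ℤ, 2 ≤ j → j ≤ (k : ℤ) → t j = 1)
    (hpzero : ∀ n : ℤ, 1 - (k : ℤ) < n → n ≤ 0 → p n = 0)
    (hprec : ∀ n : ℤ, 0 < n →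
      p n = 2 * p (n - 1) + ∑ j ∈ Finset.Icc (2 : ℤ) (k : ℤ), p (n - j))
    (m : ℕ) :
    p (((m + 1 : ℕ) : ℤ) + 1)
      = ∑ d ∈ range (m + 1), bandCoeff k t d * p (((m - d : ℕ) : ℤ) + 1) := by
  set f : ℕ → ℂ := fun d => bandCoeff k t d * p (m + 1 - d) with hf
  have hf_of_ge_k : ∀ d ≥ k, f d = 0 := fun d hd => by
    simp [hf, bandCoeff, show ¬ d < k by omega]
  have hf_of_gt_m : ∀ d ≥ m + 1, f d = 0 := fun d hd => by
    by_cases hdk : d < k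
    · simp [hf, hpzero (m + 1 - d) (by omega) (by omega)]
    · exact hf_of_ge_k d (by omega)
  calc p (((m + 1 : ℕ) : ℤ) + 1)
      = ∑ d ∈ range k, f d := by
        rw [pell_eq_sum_range hk ht1 ht hprec (by positivity)]
        refine sum_congr rfl fun d hd => ?_
        simp only [hf, bandCoeff, if_pos (mem_range.mp hd)]
        push_cast
        ring_nf
    _ = ∑ d ∈ range (m + 1), f d := by
        rw [← eventually_constant_sum hf_of_ge_k (Nat.le_add_right k (m + 1)),
          ← eventually_constant_sum hf_of_gt_m (Nat.le_add_left (m + 1) k)]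
    _ = ∑ d ∈ range (m + 1), bandCoeff k t d * p (((m - d : ℕ) : ℤ) + 1) := by
        refine sum_congr rfl fun d hd => ?_
        rw [hf, Nat.cast_sub (by simpa [Nat.lt_succ_iff] using hd)]
        ring_nf

end PellRecurrence

theorem perH_bandSymbol_eq_pell {k : ℕ} (hk : 2 ≤ k) {t : ℤ → ℂ} (ht0 : t 0 = 1) (ht1 : t 1 = 2)
    (ht : ∀ j : ℤ, 2 ≤ j → j ≤ (k : ℤ) → t j = 1)
    {p : ℤ → ℂ} (hpinit : p (1 - (k : ℤ)) = 1)
    (hpzero : ∀ n : ℤ, 1 - (k : ℤ) < n → n ≤ 0 → p n = 0)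
    (hprec : ∀ n : ℤ, 0 < n →
      p n = 2 * p (n - 1) + ∑ j ∈ Finset.Icc (2 : ℤ) (k : ℤ), p (n - j))
    {ε : ℂ} (hε : ε ≠ 0) (n : ℕ) :
    perH n (fun r s => bandSymbol k t ε ((r : ℤ) - s)) = p ((n : ℤ) + 1) := by
  have ht2 : t 2 ≠ 0 := by simp [ht 2 le_rfl (by omega)]
  rw [perH_eq_permanent_toeplitz]
  refine congrFun (eq_of_convolution_recurrence (w := bandCoeff k t)
    (u := fun m => (Matrix.toeplitz (bandSymbol k t ε) m).permanent) (v := fun m => p (m + 1))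
    ?_ (permanent_toeplitz_bandSymbol_succ hε ht0 ht2)
    (pell_succ_eq_sum_bandCoeff (by omega) ht1 ht hpzero hprec)) n
  simp [Matrix.permanent_isEmpty, Matrix.toeplitz, pell_one hk hpinit hpzero hprec]

theorem per_HL_eq_kSOkP_general (k : ℕ) (hk : 2 ≤ k) (t : ℤ → ℂ) (ht0 : t 0 = 1) (ht1 : t 1 = 2)
    (ht : ∀ j : ℤ, 2 ≤ j → j ≤ (k : ℤ) → t j = 1)
    (p : ℤ → ℂ) (hpinit : p (1 - (k : ℤ)) = 1)
    (hpzero : ∀ n : ℤ, 1 - (k : ℤ) < n → n ≤ 0 → p n = 0)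
    (hprec : ∀ n : ℤ, 0 < n →
      p n = 2 * p (n - 1) + ∑ j ∈ Finset.Icc (2 : ℤ) (k : ℤ), p (n - j))
    (n : ℕ) :
    perH n (hEntry k t) = p ((n : ℤ) + 1) ∧ perH n (lEntry k t) = p ((n : ℤ) + 1) := by
  rw [hEntry_eq_bandSymbol, lEntry_eq_bandSymbol]
  exact ⟨perH_bandSymbol_eq_pell hk ht0 ht1 ht hpinit hpzero hprec Complex.I_ne_zero n,
    perH_bandSymbol_eq_pell hk ht0 ht1 ht hpinit hpzero hprec one_ne_zero n⟩

theorem per_HL_eq_kSOkP (k : ℕ) (hk : 2 ≤ k) (t : ℤ → ℂ) (ht0 : t 0 = 1) (ht1 : t 1 = 2)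
    (ht : ∀ j : ℤ, 2 ≤ j → j ≤ (k : ℤ) → t j = 1)
    (p : ℤ → ℂ) (hpinit : p (1 - (k : ℤ)) = 1)
    (hpzero : ∀ n : ℤ, 1 - (k : ℤ) < n → n ≤ 0 → p n = 0)
    (hprec : ∀ n : ℤ, 0 < n →
      p n = 2 * p (n - 1) + ∑ j ∈ Finset.Icc (2 : ℤ) (k : ℤ), p (n - j))
    (n : ℕ) (hn : 1 ≤ n) :
    perH n (hEntry k t) = p ((n : ℤ) + 1) ∧ perH n (lEntry k t) = p ((n : ℤ) + 1) :=
  per_HL_eq_kSOkP_general k hk t ht0 ht1 ht p hpinit hpzero hprec n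
end
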